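/- arXiv:1704.00990 — 3 statements merged into one kernel-verified Lean document; each statement's English description precedes it below -/
import Mathlib

section
/- Let G be an almost simple group with socle S and let K be a permutation group with G* ≤ K ≤ Sym(G). Then every K-block B with 1 ∈ B and |B| ≥ 2 is the underlying set of a normal subgroup of G containing S. -/
/-- The subgroup of `Sym(A)` consisting of the right translations `x ↦ x * g`. -/
def rightMuls (A : Type*) [Group A] : Subgroup (Equiv.Perm A) :=
  (MulAction.toPermHom Aᵐᵒᵖ A).range

/-- The holomorph of `A`, i.e. the normalizer in `Sym(A)` of the group of right
translations. -/
def Hol (A : Type*) [Group A] : Subgroup (Equiv.Perm A) :=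
  Subgroup.normalizer (rightMuls A : Set (Equiv.Perm A))

/-- `D(2,A)`: the subgroup of `Sym(A)` generated by `Hol(A)` and the inversion
permutation `g ↦ g⁻¹`. -/
def D2 (A : Type*) [Group A] : Subgroup (Equiv.Perm A) :=
  Hol A ⊔ Subgroup.closure {Equiv.inv A}

/-- The homomorphism `H × H →* Sym(A)` sending `(h₁, h₂)` to `x ↦ h₁ * x * h₂⁻¹`. -/
def biTransHom {A : Type*} [Group A] (H : Subgroup A) : H × H →* Equiv.Perm A where
  toFun p := (Equiv.mulLeft (p.1 : A)).trans (Equiv.mulRight ((p.2 : A)⁻¹))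
  map_one' := by ext x; simp
  map_mul' p q := by ext x; simp [mul_assoc]

/-- `H*`: the subgroup of `Sym(A)` of all permutations `x ↦ h₁ * x * h₂` with
`h₁, h₂ ∈ H`. -/
def starGroup {A : Type*} [Group A] (H : Subgroup A) : Subgroup (Equiv.Perm A) :=
  (biTransHom H).range

/-- The automorphism group of the Cayley graph `Cay(A, X)`: all permutations `f`
of `A` such that `h * g⁻¹ ∈ X ↔ f h * (f g)⁻¹ ∈ X` for all `g, h`. -/
def cayAut {A : Type*} [Group A] (X : Set A) : Subgroup (Equiv.Perm A) where
  carrier := {f : Equiv.Perm A | ∀ g h : A, h * g⁻¹ ∈ X ↔ f h * (f g)⁻¹ ∈ X}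
  one_mem' := by intro g h; simp
  mul_mem' := by
    intro a b ha hb g h
    simpa [Equiv.Perm.mul_apply] using (hb g h).trans (ha (b g) (b h))
  inv_mem' := by
    intro a ha g h
    simpa using (ha (a⁻¹ g) (a⁻¹ h)).symm

/-- A `K`-block: a subset `B` such that every `k ∈ K` either fixes `B` setwise or
moves it to a disjoint set. -/
def IsBlock {A : Type*} [Group A] (K : Subgroup (Equiv.Perm A)) (B : Set A) : Prop :=
  ∀ k ∈ K, (k : Equiv.Perm A) '' B = B ∨ ((k : Equiv.Perm A) '' B) ∩ B = ∅

/-- The minimal block of `K`: the intersection of all `K`-blocks of size at least 2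
containing the identity. -/
def minBlock {A : Type*} [Group A] (K : Subgroup (Equiv.Perm A)) : Set A :=
  ⋂₀ {B : Set A | IsBlock K B ∧ (1 : A) ∈ B ∧ 2 ≤ B.ncard}

/-- The right coset `L * g`. -/
def rcoset {A : Type*} [Group A] (L : Subgroup A) (g : A) : Set A :=
  {x : A | x * g⁻¹ ∈ L}

/-- `K_𝔏`: the subgroup of all elements of `K` mapping each right coset of `L` to
itself. -/
def stabCosets {A : Type*} [Group A] (K : Subgroup (Equiv.Perm A)) (L : Subgroup A) :
    Subgroup (Equiv.Perm A) where
  carrier := {f : Equiv.Perm A | f ∈ K ∧ ∀ x : A, f x * x⁻¹ ∈ L}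
  one_mem' := ⟨K.one_mem, fun x => by simpa using L.one_mem⟩
  mul_mem' := by
    rintro a b ⟨haK, ha⟩ ⟨hbK, hb⟩
    refine ⟨K.mul_mem haK hbK, fun x => ?_⟩
    have := L.mul_mem (ha (b x)) (hb x)
    simpa [Equiv.Perm.mul_apply, mul_assoc] using this
  inv_mem' := by
    rintro a ⟨haK, ha⟩
    refine ⟨K.inv_mem haK, fun x => ?_⟩
    have := L.inv_mem (ha (a⁻¹ x))
    simpa [mul_inv_rev] using this

/-- Two subsets `X`, `X'` are equivalent (w.r.t. `K` and `L`) if every element of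
`K_𝔏` fixes `X` pointwise iff it fixes `X'` pointwise. -/
def cosetEquiv {A : Type*} [Group A] (K : Subgroup (Equiv.Perm A)) (L : Subgroup A)
    (X X' : Set A) : Prop :=
  ∀ f ∈ stabCosets K L,
    ((∀ x ∈ X, (f : Equiv.Perm A) x = x) ↔ (∀ x ∈ X', (f : Equiv.Perm A) x = x))

/-- The union `U` of the right cosets of `L` that are equivalent to `L`. -/
def Uset {A : Type*} [Group A] (K : Subgroup (Equiv.Perm A)) (L : Subgroup A) : Set A :=
  {x : A | cosetEquiv K L (L : Set A) (rcoset L x)}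

/-- A permutation group `K` is 2-closed if it contains every permutation `f` such
that every pair of points can be moved as by `f` by some element of `K`. -/
def Is2Closed {A : Type*} [Group A] (K : Subgroup (Equiv.Perm A)) : Prop :=
  ∀ f : Equiv.Perm A, (∀ a b : A, ∃ k ∈ K, (k : Equiv.Perm A) a = f a ∧ k b = f b) → f ∈ K

/-! A block containing `1` of a group containing all two-sided translations `x ↦ a * x * b`
is closed under left translation by its elements and under conjugation, hence is a normal
subgroup `H`. If `H` did not contain the socle `S`, simplicity of `S` would force
`H ∩ S = 1`; two normal subgroups meeting trivially commute, so `H` would centralize `S`,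
and `H = 1` contradicts `|B| ≥ 2`. -/

theorem mulLeft_trans_mulRight_mem_starGroup_top {G : Type*} [Group G] (a b : G) :
    (Equiv.mulLeft a).trans (Equiv.mulRight b) ∈ starGroup (⊤ : Subgroup G) :=
  ⟨(⟨a, trivial⟩, ⟨b⁻¹, trivial⟩), by ext x; simp [biTransHom]⟩

theorem IsBlock.image_eq_of_mem {A : Type*} [Group A] {K : Subgroup (Equiv.Perm A)}
    {B : Set A} (hB : IsBlock K B) {k : Equiv.Perm A} (hk : k ∈ K) {x : A} (hx : x ∈ B)
    (hkx : k x ∈ B) : k '' B = B :=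
  (hB k hk).resolve_right fun h => (h ▸ ⟨⟨x, hx, rfl⟩, hkx⟩ : k x ∈ (∅ : Set A))

namespace IsBlock

variable {G : Type*} [Group G] {K : Subgroup (Equiv.Perm G)} {B : Set G}

theorem mul_mul_mem_iff (hGK : starGroup (⊤ : Subgroup G) ≤ K) (hB : IsBlock K B)
    {a b y : G} (hy : y ∈ B) (hay : a * y * b ∈ B) (x : G) : a * x * b ∈ B ↔ x ∈ B := by
  set f : Equiv.Perm G := (Equiv.mulLeft a).trans (Equiv.mulRight b)
  have hfB : f '' B = B :=
    hB.image_eq_of_mem (hGK (mulLeft_trans_mulRight_mem_starGroup_top a b)) hy hay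
  calc a * x * b ∈ B ↔ f x ∈ f '' B := by rw [hfB]; rfl
    _ ↔ x ∈ B := f.injective.mem_set_image

theorem mul_mem_iff (hGK : starGroup (⊤ : Subgroup G) ≤ K) (hB : IsBlock K B)
    (h1B : (1 : G) ∈ B) {a : G} (ha : a ∈ B) (x : G) : a * x ∈ B ↔ x ∈ B := by
  simpa using hB.mul_mul_mem_iff hGK (b := 1) h1B (by simpa using ha) x

def toSubgroup (hGK : starGroup (⊤ : Subgroup G) ≤ K) (hB : IsBlock K B)
    (h1B : (1 : G) ∈ B) : Subgroup G where
  carrier := B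
  one_mem' := h1B
  mul_mem' {a _} ha := (hB.mul_mem_iff hGK h1B ha _).mpr
  inv_mem' {a} ha := (hB.mul_mem_iff hGK h1B ha a⁻¹).mp (by simpa using h1B)

theorem toSubgroup_normal (hGK : starGroup (⊤ : Subgroup G) ≤ K) (hB : IsBlock K B)
    (h1B : (1 : G) ∈ B) : (hB.toSubgroup hGK h1B).Normal where
  conj_mem n hn g := (hB.mul_mul_mem_iff hGK h1B (by simpa using h1B) n).mpr hn

end IsBlock

theorem Subgroup.le_of_normal_of_ne_bot {G : Type*} [Group G] {S H : Subgroup G}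
    [hS : S.Normal] [hH : H.Normal] [IsSimpleGroup S]
    (hScent : ∀ g : G, (∀ s ∈ S, g * s = s * g) → g = 1) (hH_ne : H ≠ ⊥) : S ≤ H := by
  rcases IsSimpleGroup.eq_bot_or_eq_top_of_normal (H.subgroupOf S) inferInstance with
    hbot | htop
  · have hdisj : Disjoint H S := Subgroup.subgroupOf_eq_bot.mp hbot
    refine absurd ((Subgroup.eq_bot_iff_forall H).mpr fun g hg => hScent g fun s hs => ?_) hH_ne
    exact Subgroup.commute_of_normal_of_disjoint H S hH hS hdisj g s hg hs
  · exact Subgroup.subgroupOf_eq_top.mp htop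

theorem block_is_normal_subgroup_general (G : Type*) [Group G]
    (S : Subgroup G) (hSnormal : S.Normal) (hSsimple : IsSimpleGroup S)
    (hScent : ∀ g : G, (∀ s ∈ S, g * s = s * g) → g = 1)
    (K : Subgroup (Equiv.Perm G)) (hGK : starGroup (⊤ : Subgroup G) ≤ K)
    (B : Set G) (hB : IsBlock K B) (h1B : (1 : G) ∈ B) (hB2 : 2 ≤ B.ncard) :
    ∃ H : Subgroup G, H.Normal ∧ S ≤ H ∧ (H : Set G) = B := by
  set H := hB.toSubgroup hGK h1B
  have hH : H.Normal := hB.toSubgroup_normal hGK h1B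
  have hH_ne : H ≠ ⊥ := by
    intro hbot
    have hB1 : B = {1} := congrArg SetLike.coe hbot
    rw [hB1, Set.ncard_singleton] at hB2
    omega
  exact ⟨H, hH, Subgroup.le_of_normal_of_ne_bot hScent hH_ne, rfl⟩

/-- every nontrivial `K`-block containing the identity is the underlying
set of a normal subgroup of `G` containing `S`. -/
theorem block_is_normal_subgroup (G : Type*) [Group G] [Fintype G]
    (S : Subgroup G) (hSnormal : S.Normal) (hSsimple : IsSimpleGroup S)
    (hSnonabelian : ¬ ∀ a b : S, a * b = b * a)
    (hScent : ∀ g : G, (∀ s ∈ S, g * s = s * g) → g = 1)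
    (K : Subgroup (Equiv.Perm G)) (hGK : starGroup (⊤ : Subgroup G) ≤ K)
    (B : Set G) (hB : IsBlock K B) (h1B : (1 : G) ∈ B) (hB2 : 2 ≤ B.ncard) :
    ∃ H : Subgroup G, H.Normal ∧ S ≤ H ∧ (H : Set G) = B :=
  block_is_normal_subgroup_general G S hSnormal hSsimple hScent K hGK B hB h1B hB2
end

section
/- Let G be a finite group with a normal subgroup S that is simple and nonabelian and whose centralizer in G is trivial (so G is almost simple with socle S). Then the normalizer in Sym(G) of the subgroup S* equals D(2,G). -/
/-!
`S*` is the internal direct product of `L = {x ↦ s * x}` and `R = {x ↦ x * s}` (`s ∈ S`), two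
copies of `S` centralizing each other. As `S` is simple and non-abelian, `L` and `R` are the only
normal subgroups of `S*` isomorphic to `S`, so conjugation by an element `f` of the normalizer
fixes or swaps them. The inversion `σ` swaps them, so after composing with `σ` and a translation
we may assume `f 1 = 1` and that `f` normalizes `L` and `R`. Then `f (s * x) = f s * f x` and
`f (x * s) = f x * f s` for `s ∈ S`, and since `G` acts faithfully on `S` by conjugation, `f` is an
automorphism. Conversely `S` lies in every nontrivial normal subgroup, hence is characteristic, so
automorphisms, translations and `σ` all normalize `S*`.
-/
open Equiv Subgroup

namespace Subgroup

variable {Q : Type*} [Group Q] {H K L R : Subgroup Q}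

theorem le_of_not_disjoint_of_le_normalizer [IsSimpleGroup H] (hH : H ≤ normalizer K)
    (h : ¬ Disjoint K H) : H ≤ K := by
  have : (K.subgroupOf H).Normal := normal_subgroupOf_of_le_normalizer hH
  rcases IsSimpleGroup.eq_bot_or_eq_top_of_normal _ this with h' | h'
  · exact absurd (subgroupOf_eq_bot.mp h') h
  · exact subgroupOf_eq_top.mp h'

theorem le_centralizer_of_disjoint (hHK : H ≤ normalizer K) (hKH : K ≤ normalizer H)
    (h : Disjoint H K) : H ≤ centralizer K := by
  intro x hx
  rw [mem_centralizer_iff]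
  intro y hy
  have hcomm : x * y * x⁻¹ * y⁻¹ = 1 := by
    refine disjoint_def.mp h ?_ ?_
    · simpa only [mul_assoc] using
        H.mul_mem hx ((mem_normalizer_iff.mp (hKH hy) x⁻¹).mp (H.inv_mem hx))
    · exact K.mul_mem ((mem_normalizer_iff.mp (hHK hx) y).mp hy) (K.inv_mem hy)
  exact (mul_inv_eq_iff_eq_mul.mp (mul_inv_eq_one.mp hcomm)).symm

theorem map_eq_or_eq_of_map_sup_eq [IsSimpleGroup L] [IsSimpleGroup R]
    (hL : ¬ IsMulCommutative L) (hLR : L ≤ centralizer R) {φ : MulAut Q}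
    (hφ : (L ⊔ R).map φ = L ⊔ R) : L.map φ = L ∨ L.map φ = R := by
  set M := L.map (φ : Q →* Q)
  have : IsSimpleGroup M := (L.equivMapOfInjective _ φ.injective).symm.isSimpleGroup
  have hLnorm : L ⊔ R ≤ normalizer L :=
    sup_le le_normalizer ((le_centralizer_iff.mp hLR).trans (centralizer_le_normalizer _))
  have hRnorm : L ⊔ R ≤ normalizer R :=
    sup_le (hLR.trans (centralizer_le_normalizer _)) le_normalizer
  have hMnorm : L ⊔ R ≤ normalizer M :=
    hφ ▸ (map_mono hLnorm).trans (map_equiv_normalizer_eq L φ).le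
  have hMLR : M ≤ L ⊔ R := hφ ▸ map_mono le_sup_left
  by_cases hML : Disjoint M L
  · by_cases hMR : Disjoint M R
    · refine absurd ?_ hL
      have hMM : M ≤ centralizer M := hMLR.trans <| sup_le
        (le_centralizer_iff.mp (le_centralizer_of_disjoint (hMLR.trans hLnorm)
          (le_sup_left.trans hMnorm) hML))
        (le_centralizer_iff.mp (le_centralizer_of_disjoint (hMLR.trans hRnorm)
          (le_sup_right.trans hMnorm) hMR))
      have := le_centralizer_iff_isMulCommutative.mp hMM
      rw [← comap_map_eq_self_of_injective (f := (φ : Q →* Q)) φ.injective L]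
      exact M.comap_injective_isMulCommutative φ.injective
    · exact Or.inr <| le_antisymm
        (le_of_not_disjoint_of_le_normalizer (hMLR.trans hRnorm) fun h => hMR h.symm)
        (le_of_not_disjoint_of_le_normalizer (le_sup_right.trans hMnorm) hMR)
  · exact Or.inl <| le_antisymm
      (le_of_not_disjoint_of_le_normalizer (hMLR.trans hLnorm) fun h => hML h.symm)
      (le_of_not_disjoint_of_le_normalizer (le_sup_left.trans hMnorm) hML)

theorem map_eq_and_map_eq_or_swap [IsSimpleGroup L] [IsSimpleGroup R]
    (hL : ¬ IsMulCommutative L) (hR : ¬ IsMulCommutative R) (hLR : L ≤ centralizer R)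
    {φ : MulAut Q} (hφ : (L ⊔ R).map φ = L ⊔ R) :
    L.map φ = L ∧ R.map φ = R ∨ L.map φ = R ∧ R.map φ = L := by
  have hne : L ≠ R := fun h => hL (le_centralizer_iff_isMulCommutative.mp (h ▸ hLR))
  rcases map_eq_or_eq_of_map_sup_eq hL hLR hφ with h₁ | h₁ <;>
    rcases map_eq_or_eq_of_map_sup_eq hR (le_centralizer_iff.mp hLR) (sup_comm L R ▸ hφ)
      with h₂ | h₂
  · exact Or.inl ⟨h₁, h₂⟩
  · exact absurd (map_injective φ.injective (h₁.trans h₂.symm)) hne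
  · exact absurd (map_injective φ.injective (h₁.trans h₂.symm)) hne
  · exact Or.inr ⟨h₁, h₂⟩

variable {G : Type*} [Group G] {S : Subgroup G}

theorem le_of_normal_of_ne_bot_s9 [S.Normal] [IsSimpleGroup S] (hC : centralizer (S : Set G) = ⊥)
    {T : Subgroup G} [T.Normal] (hT : T ≠ ⊥) : S ≤ T := by
  refine le_of_not_disjoint_of_le_normalizer le_normalizer_of_normal fun hdisj => hT ?_
  rw [eq_bot_iff_forall]
  intro t ht
  rw [← mem_bot, ← hC, mem_centralizer_iff]
  exact fun s hs => (commute_of_normal_of_disjoint T S ‹_› ‹_› hdisj t s ht hs).symm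

theorem eq_of_forall_conj_eq (hC : centralizer (S : Set G) = ⊥) {g h : G}
    (hgh : ∀ t ∈ S, g⁻¹ * t * g = h⁻¹ * t * h) : g = h := by
  have : h * g⁻¹ ∈ centralizer (S : Set G) := by
    rw [mem_centralizer_iff]
    intro t ht
    calc t * (h * g⁻¹) = h * (h⁻¹ * t * h) * g⁻¹ := by group
      _ = h * (g⁻¹ * t * g) * g⁻¹ := by rw [hgh t ht]
      _ = h * g⁻¹ * t := by group
  rw [hC, mem_bot, mul_inv_eq_one] at this
  exact this.symm

theorem characteristic_of_centralizer_eq_bot [S.Normal] [IsSimpleGroup S]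
    (hC : centralizer (S : Set G) = ⊥) : S.Characteristic := by
  rw [characteristic_iff_le_map]
  intro ϕ
  have : (S.map ϕ.toMonoidHom).Normal := ‹S.Normal›.map _ ϕ.surjective
  refine le_of_normal_of_ne_bot_s9 hC ?_
  rw [Ne, map_eq_bot_iff_of_injective _ ϕ.injective, ← Ne, ← nontrivial_iff_ne_bot]
  infer_instance

theorem Characteristic.apply_mem (hS : S.Characteristic) (ϕ : MulAut G) {s : G}
    (hs : s ∈ S) : ϕ s ∈ S := by
  rw [← hS.fixed ϕ] at hs
  exact hs

end Subgroup

theorem MonoidHom.not_isMulCommutative_range {H K : Type*} [Group H] [Group K] {f : H →* K}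
    (hf : Function.Injective f) (hH : ¬ IsMulCommutative H) : ¬ IsMulCommutative f.range :=
  fun _ => hH <| .of_comm fun a b => hf <| by
    simpa only [map_mul] using
      setLike_mul_comm (f.mem_range.mpr ⟨a, rfl⟩) (f.mem_range.mpr ⟨b, rfl⟩)

section Holomorph

variable {G : Type*} [Group G]

theorem mem_rightMuls_iff {π : Perm G} : π ∈ rightMuls G ↔ ∃ g, ∀ x, π x = x * g :=
  ⟨by rintro ⟨g, rfl⟩; exact ⟨g.unop, fun x => rfl⟩,
    by rintro ⟨g, hg⟩; exact ⟨MulOpposite.op g, Equiv.ext fun x => (hg x).symm⟩⟩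

theorem mem_Hol_iff {f : Perm G} : f ∈ Hol G ↔ ∃ c : G, ∃ α : MulAut G, ∀ x, f x = c * α x := by
  constructor
  · intro hf
    have hmul : ∀ x y, f (x * y) = f x * ((f 1)⁻¹ * f y) := by
      intro x y
      obtain ⟨u, hu⟩ := mem_rightMuls_iff.mp <| (mem_normalizer_iff.mp hf _).mp
        (mem_rightMuls_iff.mpr ⟨y, fun _ => rfl⟩ : Equiv.mulRight y ∈ rightMuls G)
      have key : ∀ x, f (x * y) = f x * u := fun x => by simpa using hu (f x)
      rw [key, (by simpa using key 1 : f y = f 1 * u), inv_mul_cancel_left]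
    let α : MulAut G := MulEquiv.mk' (f.trans (Equiv.mulLeft (f 1)⁻¹))
      (fun x y => by simp [hmul, mul_assoc])
    exact ⟨f 1, α, fun x => (mul_inv_cancel_left _ _).symm⟩
  · rintro ⟨c, α, hf⟩
    rw [show f = Equiv.mulLeft c * MulAut.toPerm G α from Equiv.ext hf]
    refine mul_mem (centralizer_le_normalizer _ ?_) ?_
    · rw [mem_centralizer_iff]
      intro ρ hρ
      obtain ⟨g, hg⟩ := mem_rightMuls_iff.mp hρ
      ext x
      simp [hg, mul_assoc]
    · refine (le_normalizer_iff (H := (MulAut.toPerm G).range)).mpr ?_ ⟨α, rfl⟩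
      rintro _ ⟨β, rfl⟩ ρ hρ
      obtain ⟨g, hg⟩ := mem_rightMuls_iff.mp hρ
      refine mem_rightMuls_iff.mpr ⟨β g, fun x => ?_⟩
      change β (ρ (β.symm x)) = x * β g
      simp [hg]

end Holomorph

section Star

variable {G : Type*} [Group G] {S : Subgroup G}

@[simp]
theorem biTransHom_apply (p : S × S) (x : G) : biTransHom S p x = p.1 * x * (p.2 : G)⁻¹ := rfl

theorem mem_starGroup_iff {π : Perm G} :
    π ∈ starGroup S ↔ ∃ a ∈ S, ∃ b ∈ S, ∀ x, π x = a * x * b := by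
  constructor
  · rintro ⟨⟨a, b⟩, rfl⟩
    exact ⟨a, a.2, b⁻¹, inv_mem b.2, fun x => rfl⟩
  · rintro ⟨a, ha, b, hb, h⟩
    exact ⟨(⟨a, ha⟩, ⟨b, hb⟩⁻¹), Equiv.ext fun x => by simp [h]⟩

def starLeft (S : Subgroup G) : Subgroup (Perm G) :=
  ((biTransHom S).comp (MonoidHom.inl S S)).range

def starRight (S : Subgroup G) : Subgroup (Perm G) :=
  ((biTransHom S).comp (MonoidHom.inr S S)).range

theorem starLeft_sup_starRight : starLeft S ⊔ starRight S = starGroup S := by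
  refine le_antisymm (sup_le ?_ ?_) ?_
  · rintro _ ⟨a, rfl⟩
    exact ⟨_, rfl⟩
  · rintro _ ⟨b, rfl⟩
    exact ⟨_, rfl⟩
  · rintro _ ⟨⟨a, b⟩, rfl⟩
    rw [show (a, b) = MonoidHom.inl S S a * MonoidHom.inr S S b by simp, map_mul]
    exact mul_mem_sup ⟨a, rfl⟩ ⟨b, rfl⟩

theorem starLeft_le_centralizer_starRight :
    starLeft S ≤ centralizer (starRight S : Set (Perm G)) := by
  rintro _ ⟨a, rfl⟩
  rw [mem_centralizer_iff]
  rintro _ ⟨b, rfl⟩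
  ext x
  simp [mul_assoc]

theorem biTransHom_injective (hC : centralizer (S : Set G) = ⊥) :
    Function.Injective (biTransHom S) := by
  rw [injective_iff_map_eq_one]
  rintro ⟨a, b⟩ h
  have hx : ∀ x, (a : G) * x * (b : G)⁻¹ = x := fun x => DFunLike.congr_fun h x
  have hab : (a : G) = b := by simpa [mul_inv_eq_one] using hx 1
  have ha : (a : G) ∈ centralizer (S : Set G) := by
    rw [mem_centralizer_iff]
    intro s _
    have := hx s
    rw [← hab, mul_inv_eq_iff_eq_mul] at this
    exact this.symm
  rw [hC, mem_bot] at ha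
  ext <;> simp [ha, ← hab]

theorem map_conj_starLeft_starRight [IsSimpleGroup S] (hC : centralizer (S : Set G) = ⊥)
    (hS : ¬ IsMulCommutative S) {f : Perm G} (hf : f ∈ normalizer (starGroup S : Set (Perm G))) :
    (starLeft S).map (MulAut.conj f) = starLeft S ∧
        (starRight S).map (MulAut.conj f) = starRight S ∨
      (starLeft S).map (MulAut.conj f) = starRight S ∧
        (starRight S).map (MulAut.conj f) = starLeft S := by
  have hl : Function.Injective ((biTransHom S).comp (MonoidHom.inl S S)) :=
    (biTransHom_injective hC).comp fun _ _ h => congrArg Prod.fst h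
  have hr : Function.Injective ((biTransHom S).comp (MonoidHom.inr S S)) :=
    (biTransHom_injective hC).comp fun _ _ h => congrArg Prod.snd h
  have : IsSimpleGroup (starLeft S) := (MonoidHom.ofInjective hl).symm.isSimpleGroup
  have : IsSimpleGroup (starRight S) := (MonoidHom.ofInjective hr).symm.isSimpleGroup
  refine map_eq_and_map_eq_or_swap (L := starLeft S) (R := starRight S)
    (MonoidHom.not_isMulCommutative_range hl hS) (MonoidHom.not_isMulCommutative_range hr hS)
    starLeft_le_centralizer_starRight ?_
  rw [starLeft_sup_starRight]
  exact mem_normalizer_iff_map_conj_eq.mp hf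

end Star

section Normalizer

variable {G : Type*} [Group G] {S : Subgroup G}

theorem map_conj_inv_starLeft : (starLeft S).map (MulAut.conj (Equiv.inv G)) = starRight S := by
  rw [starLeft, starRight, MonoidHom.map_range]
  congr 1
  ext s x
  simp

theorem map_conj_inv_starRight : (starRight S).map (MulAut.conj (Equiv.inv G)) = starLeft S := by
  rw [starLeft, starRight, MonoidHom.map_range]
  congr 1
  ext s x
  simp

theorem inv_mem_normalizer_starGroup : Equiv.inv G ∈ normalizer (starGroup S : Set (Perm G)) := by
  rw [mem_normalizer_iff_map_conj_eq, ← starLeft_sup_starRight, Subgroup.map_sup,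
    map_conj_inv_starLeft, map_conj_inv_starRight, sup_comm]

theorem Hol_le_normalizer_starGroup (hS : S.Characteristic) :
    Hol G ≤ normalizer (starGroup S : Set (Perm G)) := by
  rw [le_normalizer_iff]
  intro f hf π hπ
  obtain ⟨c, α, hf⟩ := mem_Hol_iff.mp hf
  obtain ⟨a, ha, b, hb, hπ⟩ := mem_starGroup_iff.mp hπ
  refine mem_starGroup_iff.mpr ⟨c * α a * c⁻¹, ?_, α b, hS.apply_mem α hb, fun y => ?_⟩
  · exact (inferInstance : S.Normal).conj_mem _ (hS.apply_mem α ha) c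
  · obtain ⟨x, rfl⟩ := f.surjective y
    rw [Perm.mul_apply, Perm.mul_apply, Perm.inv_def, Equiv.symm_apply_apply]
    simp only [hπ, hf, map_mul]
    group

theorem D2_le_normalizer_starGroup (hS : S.Characteristic) :
    D2 G ≤ normalizer (starGroup S : Set (Perm G)) :=
  sup_le (Hol_le_normalizer_starGroup hS)
    ((closure_le _).mpr (Set.singleton_subset_iff.mpr inv_mem_normalizer_starGroup))

variable {f : Perm G}

theorem map_mul_left_of_mem_normalizer_starLeft (hf1 : f 1 = 1)
    (hf : f ∈ normalizer (starLeft S : Set (Perm G))) {s : G} (hs : s ∈ S) (x : G) :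
    f (s * x) = f s * f x := by
  obtain ⟨t, ht⟩ := (mem_normalizer_iff.mp hf _).mp ⟨⟨s, hs⟩, rfl⟩
  have key : ∀ x, f (s * x) = t * f x := fun x => by
    simpa using (DFunLike.congr_fun ht (f x)).symm
  have h1 : f s = t := by simpa [hf1] using key 1
  rw [key, h1]

theorem map_mul_right_of_mem_normalizer_starRight (hf1 : f 1 = 1)
    (hf : f ∈ normalizer (starRight S : Set (Perm G))) {s : G} (hs : s ∈ S) :
    f s ∈ S ∧ ∀ x, f (x * s) = f x * f s := by
  obtain ⟨t, ht⟩ := (mem_normalizer_iff.mp hf _).mp ⟨⟨s, hs⟩⁻¹, rfl⟩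
  have key : ∀ x, f (x * s) = f x * (t : G)⁻¹ := fun x => by
    simpa using (DFunLike.congr_fun ht (f x)).symm
  have h1 : f s = (t : G)⁻¹ := by simpa [hf1] using key 1
  exact ⟨h1 ▸ inv_mem t.2, fun x => by rw [key, h1]⟩

theorem mem_Hol_of_mem_normalizer_starLeft_starRight [S.Normal]
    (hC : centralizer (S : Set G) = ⊥) (hf1 : f 1 = 1)
    (hL : f ∈ normalizer (starLeft S : Set (Perm G)))
    (hR : f ∈ normalizer (starRight S : Set (Perm G))) : f ∈ Hol G := by
  have hconj : ∀ s ∈ S, ∀ x, f (x⁻¹ * s * x) = (f x)⁻¹ * f s * f x := by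
    intro s hs x
    have hs' : x⁻¹ * s * x ∈ S := by simpa using ‹S.Normal›.conj_mem s hs x⁻¹
    have := (map_mul_right_of_mem_normalizer_starRight hf1 hR hs').2 x
    rw [show x * (x⁻¹ * s * x) = s * x by group,
      map_mul_left_of_mem_normalizer_starLeft hf1 hL hs] at this
    rw [mul_assoc (f x)⁻¹, this, inv_mul_cancel_left]
  have hmul : ∀ x y, f (x * y) = f x * f y := by
    intro x y
    apply Subgroup.eq_of_forall_conj_eq hC
    intro t ht
    have hf1' : f⁻¹ 1 = 1 := by rw [Perm.inv_eq_iff_eq, hf1]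
    obtain ⟨s, rfl⟩ := f.surjective t
    have hs : s ∈ S := by
      simpa using (map_mul_right_of_mem_normalizer_starRight hf1' (inv_mem hR) ht).1
    rw [← hconj _ hs, show (x * y)⁻¹ * s * (x * y) = y⁻¹ * (x⁻¹ * s * x) * y by group,
      hconj _ (by simpa using ‹S.Normal›.conj_mem _ hs x⁻¹), hconj _ hs]
    group
  exact mem_Hol_iff.mpr ⟨1, MulEquiv.mk' f hmul, fun x => (one_mul _).symm⟩

theorem mem_D2_of_mem_normalizer_of_apply_one [S.Normal] [IsSimpleGroup S]
    (hC : centralizer (S : Set G) = ⊥) (hS : ¬ IsMulCommutative S) {f : Perm G}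
    (hf : f ∈ normalizer (starGroup S : Set (Perm G))) (hf1 : f 1 = 1) : f ∈ D2 G := by
  rcases map_conj_starLeft_starRight hC hS hf with ⟨hL, hR⟩ | ⟨hL, hR⟩
  · exact le_sup_left (a := Hol G) <| mem_Hol_of_mem_normalizer_starLeft_starRight hC hf1
      (mem_normalizer_iff_map_conj_eq.mpr hL) (mem_normalizer_iff_map_conj_eq.mpr hR)
  · have hσ : Equiv.inv G ∈ D2 G := le_sup_right (a := Hol G) (subset_closure rfl)
    have hσf : Equiv.inv G * f ∈ Hol G := by
      refine mem_Hol_of_mem_normalizer_starLeft_starRight hC (by simp [hf1]) ?_ ?_ <;>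
        rw [mem_normalizer_iff_map_conj_eq, map_mul, MulAut.mul_def, MulEquiv.coe_monoidHom_trans,
          ← map_map]
      · rw [hL, map_conj_inv_starRight]
      · rw [hR, map_conj_inv_starLeft]
    rw [← inv_mul_cancel_left (Equiv.inv G) f]
    exact mul_mem (inv_mem hσ) (le_sup_left (a := Hol G) hσf)

end Normalizer

theorem normalizer_socle_star_eq_D2_general (G : Type*) [Group G]
    (S : Subgroup G) (hSnormal : S.Normal) (hSsimple : IsSimpleGroup S)
    (hSnonabelian : ¬ ∀ a b : S, a * b = b * a)
    (hScent : ∀ g : G, (∀ s ∈ S, g * s = s * g) → g = 1)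
    : Subgroup.normalizer (starGroup S : Set (Equiv.Perm G)) = D2 G := by
  have hC : centralizer (S : Set G) = ⊥ := (eq_bot_iff_forall _).mpr fun g hg =>
    hScent g fun s hs => (mem_centralizer_iff.mp hg s hs).symm
  have hchar := characteristic_of_centralizer_eq_bot hC
  refine le_antisymm (fun f hf => ?_) (D2_le_normalizer_starGroup hchar)
  have hc : Equiv.mulLeft (f 1) ∈ Hol G := mem_Hol_iff.mpr ⟨f 1, 1, fun _ => rfl⟩
  have hf₀ : (Equiv.mulLeft (f 1))⁻¹ * f ∈ normalizer (starGroup S : Set (Perm G)) :=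
    mul_mem (inv_mem (Hol_le_normalizer_starGroup hchar hc)) hf
  rw [← mul_inv_cancel_left (Equiv.mulLeft (f 1)) f]
  exact mul_mem (le_sup_left (a := Hol G) hc) <|
    mem_D2_of_mem_normalizer_of_apply_one hC (fun h => hSnonabelian (isMulCommutative_iff.mp h))
      hf₀ (by simp [Perm.inv_def])

/-- the normalizer in `Sym(G)` of `S*` equals `D(2,G)`. -/
theorem normalizer_socle_star_eq_D2 (G : Type*) [Group G] [Fintype G]
    (S : Subgroup G) (hSnormal : S.Normal) (hSsimple : IsSimpleGroup S)
    (hSnonabelian : ¬ ∀ a b : S, a * b = b * a)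
    (hScent : ∀ g : G, (∀ s ∈ S, g * s = s * g) → g = 1)
    : Subgroup.normalizer (starGroup S : Set (Equiv.Perm G)) = D2 G :=
  normalizer_socle_star_eq_D2_general G S hSnormal hSsimple hSnonabelian hScent
end

section
/- Let G be an almost simple group with socle S, let K be a 2-closed permutation group with G* ≤ K ≤ Sym(G), let L be the minimal block of K and U the union of the right cosets of L equivalent to L, and suppose K is of normal type, i.e., L = S and K^L ≤ D(2,L), where L is regarded as a group in its own right. Then K^U ≤ D(2,U), where U is regarded as a group in its own right and D(2,U) is the corresponding subgroup of Sym(U). -/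
/-!
Every element of `D(2,A)` is affine, `p (x * y) = p x * (p 1)⁻¹ * p y` (these are exactly
`Hol A`), or anti-affine, `p (x * y) = p y * (p 1)⁻¹ * p x`, and conversely.

Since `L` is the minimal block and `G* ≤ K`, the group `K` permutes the right cosets of `L`, so
`K_𝔏` is normalised by `K`. The key rigidity fact is that an element `B ∈ K` fixing `L` pointwise
fixes `U` pointwise: for a translation `t` by `l ∈ L`, the commutator `B⁻¹ t B t⁻¹` lies in `K_𝔏`
and fixes `L`, hence fixes `U` by the definition of `U`. Thus `B (z * l) = B z * l` and
`B (l * z) = l * B z` for `z ∈ U`, so `z⁻¹ * B z` centralises `L = S` and is trivial. Hence two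
elements of `K` that agree on `L` agree on `U`.

For `f ∈ K` preserving `U`, the normalised map `x ↦ f x * (f 1)⁻¹` preserves `L`, so by normal
type `f` is affine or anti-affine on `L`. In the affine case, `f ∘ (l * ·)` and
`(f l * (f 1)⁻¹ * ·) ∘ f` agree on `L`, hence on `U`; then `f ∘ (· * u)` and
`(· * ((f 1)⁻¹ * f u)) ∘ f` agree on `L`, hence on `U`, so `f` is affine on `U`.
-/
open Equiv

section Affine

variable {A : Type*} [Group A]

def IsAffine (p : A → A) : Prop := ∀ x y, p (x * y) = p x * (p 1)⁻¹ * p y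

def IsAntiAffine (p : A → A) : Prop := ∀ x y, p (x * y) = p y * (p 1)⁻¹ * p x

lemma IsAffine.map_mul_inv_mul {p : A → A} (hp : IsAffine p) (u v w : A) :
    p (u * v⁻¹ * w) = p u * (p v)⁻¹ * p w := by
  have h := hp (u * v⁻¹) v
  rw [inv_mul_cancel_right] at h
  rw [hp, h]; group

lemma IsAntiAffine.map_mul_inv_mul {p : A → A} (hp : IsAntiAffine p) (u v w : A) :
    p (u * v⁻¹ * w) = p w * (p v)⁻¹ * p u := by
  have h := hp (u * v⁻¹) v
  rw [inv_mul_cancel_right] at h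
  rw [hp, h]; group

lemma IsAffine.comp {p q : A → A} (hp : IsAffine p) (hq : IsAffine q) : IsAffine (p ∘ q) :=
  fun x y => by simp only [Function.comp_apply, hq x y, hp.map_mul_inv_mul]

lemma IsAffine.comp_isAntiAffine {p q : A → A} (hp : IsAffine p) (hq : IsAntiAffine q) :
    IsAntiAffine (p ∘ q) :=
  fun x y => by simp only [Function.comp_apply, hq x y, hp.map_mul_inv_mul]

lemma IsAntiAffine.comp_isAffine {p q : A → A} (hp : IsAntiAffine p) (hq : IsAffine q) :
    IsAntiAffine (p ∘ q) :=
  fun x y => by simp only [Function.comp_apply, hq x y, hp.map_mul_inv_mul]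

lemma IsAntiAffine.comp {p q : A → A} (hp : IsAntiAffine p) (hq : IsAntiAffine q) :
    IsAffine (p ∘ q) :=
  fun x y => by simp only [Function.comp_apply, hq x y, hp.map_mul_inv_mul]

lemma IsAffine.perm_inv {p : Perm A} (hp : IsAffine p) : IsAffine ⇑p⁻¹ := fun x y =>
  p.injective <| by simp only [hp.map_mul_inv_mul, Perm.coe_inv, apply_symm_apply, inv_one, mul_one]

lemma IsAntiAffine.perm_inv {p : Perm A} (hp : IsAntiAffine p) : IsAntiAffine ⇑p⁻¹ := fun x y =>
  p.injective <| by simp only [hp.map_mul_inv_mul, Perm.coe_inv, apply_symm_apply, inv_one, mul_one]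

lemma isAntiAffine_inv : IsAntiAffine (Equiv.inv A) := fun x y => by simp

def affineOrAntiAffinePerms (A : Type*) [Group A] : Subgroup (Perm A) where
  carrier := {p | IsAffine ⇑p ∨ IsAntiAffine ⇑p}
  one_mem' := Or.inl fun x y => by simp
  mul_mem' := by
    rintro p q (hp | hp) (hq | hq)
    · exact Or.inl (hp.comp hq)
    · exact Or.inr (hp.comp_isAntiAffine hq)
    · exact Or.inr (hp.comp_isAffine hq)
    · exact Or.inl (hp.comp hq)
  inv_mem' := by
    rintro p (hp | hp)
    · exact Or.inl hp.perm_inv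
    · exact Or.inr hp.perm_inv

lemma mem_rightMuls_iff_s14 {h : Perm A} : h ∈ rightMuls A ↔ ∃ a, h = Equiv.mulRight a := by
  refine ⟨fun ⟨m, hm⟩ => ⟨m.unop, hm ▸ ?_⟩, fun ⟨a, ha⟩ => ⟨MulOpposite.op a, ha ▸ ?_⟩⟩ <;>
    ext <;> simp

lemma IsAffine.conj_mulRight {p : Perm A} (hp : IsAffine p) (a : A) :
    p * Equiv.mulRight a * p⁻¹ = Equiv.mulRight ((p 1)⁻¹ * p a) := by
  ext x
  simp only [Perm.mul_apply, coe_mulRight, hp _ a, Perm.coe_inv, apply_symm_apply, mul_assoc]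

lemma mem_Hol_iff_s14 {p : Perm A} : p ∈ Hol A ↔ IsAffine p := by
  rw [Hol, Subgroup.mem_set_normalizer_iff]
  refine ⟨fun hp x y => ?_, fun hp h => ?_⟩
  · obtain ⟨b, hb⟩ := mem_rightMuls_iff_s14.1 ((hp _).1 (mem_rightMuls_iff_s14.2 ⟨y, rfl⟩))
    have hshift : ∀ z, p (z * y) = p z * b := fun z => by
      simpa using DFunLike.congr_fun hb (p z)
    have hb1 : p y = p 1 * b := by simpa using hshift 1
    rw [hshift, hb1]; group
  · constructor
    · intro hh
      obtain ⟨a, rfl⟩ := mem_rightMuls_iff_s14.1 hh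
      exact mem_rightMuls_iff_s14.2 ⟨_, hp.conj_mulRight a⟩
    · intro hh
      obtain ⟨b, hb⟩ := mem_rightMuls_iff_s14.1 hh
      rw [show h = p⁻¹ * Equiv.mulRight b * p⁻¹⁻¹ by rw [← hb]; group]
      exact mem_rightMuls_iff_s14.2 ⟨_, hp.perm_inv.conj_mulRight b⟩

lemma mem_D2_of_isAffine {p : Perm A} (hp : IsAffine p) : p ∈ D2 A :=
  Subgroup.mem_sup_left (mem_Hol_iff_s14.2 hp)

lemma mem_D2_of_isAntiAffine {p : Perm A} (hp : IsAntiAffine p) : p ∈ D2 A := by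
  have hinv : Equiv.inv A ∈ D2 A := Subgroup.mem_sup_right (Subgroup.subset_closure rfl)
  have hp' : p * Equiv.inv A ∈ D2 A := mem_D2_of_isAffine (hp.comp isAntiAffine_inv)
  convert mul_mem hp' hinv
  ext; simp

lemma D2_le_affineOrAntiAffinePerms : D2 A ≤ affineOrAntiAffinePerms A :=
  sup_le (fun _ hp => Or.inl (mem_Hol_iff_s14.1 hp))
    ((Subgroup.closure_le _).2 (by rintro _ rfl; exact Or.inr isAntiAffine_inv))

def IsAffineOn (p : A → A) (s : Set A) : Prop :=
  ∀ x ∈ s, ∀ y ∈ s, p (x * y) = p x * (p 1)⁻¹ * p y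

def IsAntiAffineOn (p : A → A) (s : Set A) : Prop :=
  ∀ x ∈ s, ∀ y ∈ s, p (x * y) = p y * (p 1)⁻¹ * p x

lemma isAffine_subtypePerm_iff {H : Subgroup A} {p : Perm A} (h : ∀ x, p x ∈ H ↔ x ∈ H) :
    IsAffine ⇑(p.subtypePerm h) ↔ IsAffineOn p H := by
  simp [IsAffine, IsAffineOn, Subtype.ext_iff]

lemma isAntiAffine_subtypePerm_iff {H : Subgroup A} {p : Perm A} (h : ∀ x, p x ∈ H ↔ x ∈ H) :
    IsAntiAffine ⇑(p.subtypePerm h) ↔ IsAntiAffineOn p H := by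
  simp [IsAntiAffine, IsAntiAffineOn, Subtype.ext_iff]

lemma mul_mul_inv_mul_mul (a b d c : A) : a * c * (b * c)⁻¹ * (d * c) = a * b⁻¹ * d * c := by
  group

lemma isAffineOn_mulRight_mul_iff {p : Perm A} {s : Set A} (c : A) :
    IsAffineOn ⇑(Equiv.mulRight c * p) s ↔ IsAffineOn p s := by
  simp only [IsAffineOn, Perm.mul_apply, coe_mulRight, mul_mul_inv_mul_mul, mul_left_inj]

lemma isAntiAffineOn_mulRight_mul_iff {p : Perm A} {s : Set A} (c : A) :
    IsAntiAffineOn ⇑(Equiv.mulRight c * p) s ↔ IsAntiAffineOn p s := by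
  simp only [IsAntiAffineOn, Perm.mul_apply, coe_mulRight, mul_mul_inv_mul_mul, mul_left_inj]

end Affine

section PermGroup

variable {G : Type*} [Group G] {K : Subgroup (Perm G)} {L U : Subgroup G}

lemma mulLeft_mem (hGK : starGroup (⊤ : Subgroup G) ≤ K) (a : G) : Equiv.mulLeft a ∈ K :=
  hGK ⟨(⟨a, trivial⟩, 1), by ext; simp [biTransHom]⟩

lemma mulRight_mem (hGK : starGroup (⊤ : Subgroup G) ≤ K) (a : G) : Equiv.mulRight a ∈ K :=
  hGK ⟨(1, ⟨a⁻¹, trivial⟩), by ext; simp [biTransHom]⟩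

lemma IsBlock.apply_mem_iff {B : Set G} (hB : IsBlock K B) (h1 : 1 ∈ B) {k : Perm G}
    (hk : k ∈ K) (hk1 : k 1 = 1) (x : G) : k x ∈ B ↔ x ∈ B := by
  have hkB : k '' B = B := (hB k hk).resolve_right fun h => h.subset ⟨⟨1, h1, hk1⟩, h1⟩
  conv_lhs => rw [← hkB]
  exact k.injective.mem_set_image

lemma apply_mem_iff_of_minBlock (hL : (L : Set G) = minBlock K) {k : Perm G} (hk : k ∈ K)
    (hk1 : k 1 = 1) (x : G) : k x ∈ L ↔ x ∈ L := by
  simp only [← SetLike.mem_coe, hL, minBlock, Set.mem_sInter]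
  exact forall₂_congr fun B hB => hB.1.apply_mem_iff hB.2.1 hk hk1 x

lemma apply_mul_inv_apply_mem (hGK : starGroup (⊤ : Subgroup G) ≤ K)
    (hL : (L : Set G) = minBlock K) {k : Perm G} (hk : k ∈ K) {a b : G} (hab : a * b⁻¹ ∈ L) :
    k a * (k b)⁻¹ ∈ L := by
  have hk' : Equiv.mulRight (k b)⁻¹ * k * Equiv.mulRight b ∈ K :=
    mul_mem (mul_mem (mulRight_mem hGK _) hk) (mulRight_mem hGK _)
  simpa using (apply_mem_iff_of_minBlock hL hk' (by simp) _).2 hab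

lemma mulLeft_mem_stabCosets (hGK : starGroup (⊤ : Subgroup G) ≤ K) {l : G} (hl : l ∈ L) :
    Equiv.mulLeft l ∈ stabCosets K L :=
  ⟨mulLeft_mem hGK l, fun x => by simpa using hl⟩

lemma mulRight_mem_stabCosets (hGK : starGroup (⊤ : Subgroup G) ≤ K) (hLn : L.Normal)
    {l : G} (hl : l ∈ L) : Equiv.mulRight l ∈ stabCosets K L :=
  ⟨mulRight_mem hGK l, fun x => by simpa using hLn.conj_mem l hl x⟩

lemma inv_mul_mul_mem_stabCosets (hGK : starGroup (⊤ : Subgroup G) ≤ K)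
    (hL : (L : Set G) = minBlock K) {m k : Perm G} (hm : m ∈ stabCosets K L) (hk : k ∈ K) :
    k⁻¹ * m * k ∈ stabCosets K L :=
  ⟨mul_mem (mul_mem (inv_mem hk) hm.1) hk, fun x => by
    simpa using apply_mul_inv_apply_mem hGK hL (inv_mem hk) (hm.2 (k x))⟩

lemma le_of_coe_eq_Uset (hU : (U : Set G) = Uset K L) : L ≤ U := by
  intro l hl
  have hcoset : rcoset L l = L := Set.ext fun x => mul_mem_cancel_right (inv_mem hl)
  rw [← SetLike.mem_coe, hU, Uset, Set.mem_ofPred_eq, hcoset]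
  exact fun _ _ => Iff.rfl

lemma apply_eq_self_on_U_of_mem_stabCosets (hU : (U : Set G) = Uset K L) {m : Perm G}
    (hm : m ∈ stabCosets K L) (hmL : ∀ x ∈ L, m x = x) {u : G} (hu : u ∈ U) : m u = u := by
  rw [← SetLike.mem_coe, hU] at hu
  exact (hu m hm).1 hmL u (by simp [rcoset])

lemma commute_on_U_of_fixes_L (hGK : starGroup (⊤ : Subgroup G) ≤ K)
    (hL : (L : Set G) = minBlock K) (hU : (U : Set G) = Uset K L) {B t : Perm G} (hB : B ∈ K)
    (hBL : ∀ x ∈ L, B x = x) (ht : t ∈ stabCosets K L) (htL : ∀ x ∈ L, t⁻¹ x ∈ L) {z : G}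
    (hz : t z ∈ U) : B (t z) = t (B z) := by
  have hm : B⁻¹ * t * B * t⁻¹ ∈ stabCosets K L :=
    mul_mem (inv_mul_mul_mem_stabCosets hGK hL ht hB) (inv_mem ht)
  have hmL : ∀ x ∈ L, (B⁻¹ * t * B * t⁻¹) x = x := fun x hx => by
    have hBt := hBL _ (htL x hx)
    simp only [Perm.mul_apply, Perm.coe_inv] at hBt ⊢
    rw [hBt, apply_symm_apply, symm_apply_eq, hBL x hx]
  have := apply_eq_self_on_U_of_mem_stabCosets hU hm hmL hz
  rw [eq_comm]
  simpa only [Perm.mul_apply, Perm.coe_inv, symm_apply_apply, symm_apply_eq] using this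

lemma apply_eq_self_on_U_of_fixes_L (hGK : starGroup (⊤ : Subgroup G) ≤ K)
    (hL : (L : Set G) = minBlock K) (hU : (U : Set G) = Uset K L) (hLn : L.Normal)
    (hcent : ∀ g : G, (∀ s ∈ L, g * s = s * g) → g = 1) {B : Perm G} (hB : B ∈ K)
    (hBL : ∀ x ∈ L, B x = x) {z : G} (hz : z ∈ U) : B z = z := by
  have hright : ∀ l ∈ L, B (z * l) = B z * l := fun l hl =>
    commute_on_U_of_fixes_L hGK hL hU hB hBL (mulRight_mem_stabCosets hGK hLn hl)
      (fun x hx => by simpa using mul_mem hx (inv_mem hl)) (mul_mem hz (le_of_coe_eq_Uset hU hl))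
  have hleft : ∀ l ∈ L, B (l * z) = l * B z := fun l hl =>
    commute_on_U_of_fixes_L hGK hL hU hB hBL (mulLeft_mem_stabCosets hGK hl)
      (fun x hx => by simpa using mul_mem (inv_mem hl) hx) (mul_mem (le_of_coe_eq_Uset hU hl) hz)
  have hcentral : z⁻¹ * B z = 1 := hcent _ fun s hs => by
    calc z⁻¹ * B z * s = z⁻¹ * B (z * s * z⁻¹ * z) := by
          rw [inv_mul_cancel_right, hright s hs, mul_assoc]
      _ = s * (z⁻¹ * B z) := by rw [hleft _ (hLn.conj_mem s hs z)]; group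
  exact (inv_mul_eq_one.1 hcentral).symm

lemma eqOn_U_of_eqOn_L (hGK : starGroup (⊤ : Subgroup G) ≤ K)
    (hL : (L : Set G) = minBlock K) (hU : (U : Set G) = Uset K L) (hLn : L.Normal)
    (hcent : ∀ g : G, (∀ s ∈ L, g * s = s * g) → g = 1) {k₁ k₂ : Perm G} (hk₁ : k₁ ∈ K)
    (hk₂ : k₂ ∈ K) (h : Set.EqOn k₁ k₂ L) : Set.EqOn k₁ k₂ U := fun z hz => by
  have hfix : ∀ x ∈ L, (k₂⁻¹ * k₁) x = x := fun x hx => by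
    rw [Perm.mul_apply, h hx, Perm.inv_eq_iff_eq]
  have := apply_eq_self_on_U_of_fixes_L hGK hL hU hLn hcent (mul_mem (inv_mem hk₂) hk₁) hfix hz
  rwa [Perm.mul_apply, Perm.inv_eq_iff_eq] at this

lemma isAffineOn_U_of_isAffineOn_L (hGK : starGroup (⊤ : Subgroup G) ≤ K)
    (hL : (L : Set G) = minBlock K) (hU : (U : Set G) = Uset K L) (hLn : L.Normal)
    (hcent : ∀ g : G, (∀ s ∈ L, g * s = s * g) → g = 1) {k : Perm G} (hk : k ∈ K)
    (h : IsAffineOn k L) : IsAffineOn k U := by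
  have hleft : ∀ l ∈ L, ∀ y ∈ U, k (l * y) = k l * (k 1)⁻¹ * k y := fun l hl y hy => by
    simpa [mul_assoc] using eqOn_U_of_eqOn_L hGK hL hU hLn hcent
      (k₁ := k * Equiv.mulLeft l) (k₂ := Equiv.mulLeft (k l * (k 1)⁻¹) * k)
      (mul_mem hk (mulLeft_mem hGK _)) (mul_mem (mulLeft_mem hGK _) hk)
      (fun x hx => by simp [h l hl x hx, mul_assoc]) hy
  intro x hx y hy
  simpa [mul_assoc] using eqOn_U_of_eqOn_L hGK hL hU hLn hcent
    (k₁ := k * Equiv.mulRight y) (k₂ := Equiv.mulRight ((k 1)⁻¹ * k y) * k)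
    (mul_mem hk (mulRight_mem hGK _)) (mul_mem (mulRight_mem hGK _) hk)
    (fun z hz => by simp [hleft z hz y hy, mul_assoc]) hx

lemma isAntiAffineOn_U_of_isAntiAffineOn_L (hGK : starGroup (⊤ : Subgroup G) ≤ K)
    (hL : (L : Set G) = minBlock K) (hU : (U : Set G) = Uset K L) (hLn : L.Normal)
    (hcent : ∀ g : G, (∀ s ∈ L, g * s = s * g) → g = 1) {k : Perm G} (hk : k ∈ K)
    (h : IsAntiAffineOn k L) : IsAntiAffineOn k U := by
  have hleft : ∀ l ∈ L, ∀ y ∈ U, k (l * y) = k y * (k 1)⁻¹ * k l := fun l hl y hy => by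
    simpa [mul_assoc] using eqOn_U_of_eqOn_L hGK hL hU hLn hcent
      (k₁ := k * Equiv.mulLeft l) (k₂ := Equiv.mulRight ((k 1)⁻¹ * k l) * k)
      (mul_mem hk (mulLeft_mem hGK _)) (mul_mem (mulRight_mem hGK _) hk)
      (fun x hx => by simp [h l hl x hx, mul_assoc]) hy
  intro x hx y hy
  simpa [mul_assoc] using eqOn_U_of_eqOn_L hGK hL hU hLn hcent
    (k₁ := k * Equiv.mulRight y) (k₂ := Equiv.mulLeft (k y * (k 1)⁻¹) * k)
    (mul_mem hk (mulRight_mem hGK _)) (mul_mem (mulLeft_mem hGK _) hk)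
    (fun z hz => by simp [hleft z hz y hy, mul_assoc]) hx

end PermGroup

theorem normal_type_KU_le_D2_general (G : Type*) [Group G]
    (S : Subgroup G) (hSnormal : S.Normal)
    (hScent : ∀ g : G, (∀ s ∈ S, g * s = s * g) → g = 1)
    (K : Subgroup (Equiv.Perm G)) (hGK : starGroup (⊤ : Subgroup G) ≤ K)
    (L : Subgroup G) (hL : (L : Set G) = minBlock K)
    (U : Subgroup G) (hU : (U : Set G) = Uset K L)
    (hLS : L = S)
    (hnormaltype : ∀ f ∈ K, ∀ hf : (∀ x : G, x ∈ L ↔ (f : Equiv.Perm G) x ∈ L),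
      Equiv.Perm.subtypePerm f (fun x => (hf x).symm) ∈ D2 ↥L) :
    ∀ f ∈ K, ∀ hf : (∀ x : G, x ∈ U ↔ (f : Equiv.Perm G) x ∈ U),
      Equiv.Perm.subtypePerm f (fun x => (hf x).symm) ∈ D2 ↥U := by
  subst hLS
  intro f hfK hfU
  have hf₀K : Equiv.mulRight (f 1)⁻¹ * f ∈ K := mul_mem (mulRight_mem hGK _) hfK
  have hf₀L (x : G) : x ∈ L ↔ (Equiv.mulRight (f 1)⁻¹ * f) x ∈ L :=
    (apply_mem_iff_of_minBlock hL hf₀K (by simp) x).symm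
  rcases D2_le_affineOrAntiAffinePerms (hnormaltype _ hf₀K hf₀L) with h | h
  · rw [isAffine_subtypePerm_iff, isAffineOn_mulRight_mul_iff] at h
    exact mem_D2_of_isAffine <| (isAffine_subtypePerm_iff _).2 <|
      isAffineOn_U_of_isAffineOn_L hGK hL hU hSnormal hScent hfK h
  · rw [isAntiAffine_subtypePerm_iff, isAntiAffineOn_mulRight_mul_iff] at h
    exact mem_D2_of_isAntiAffine <| (isAntiAffine_subtypePerm_iff _).2 <|
      isAntiAffineOn_U_of_isAntiAffineOn_L hGK hL hU hSnormal hScent hfK h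

/-- if `K` is of normal type, then `K^U ≤ D(2,U)`. -/
theorem normal_type_KU_le_D2 (G : Type*) [Group G] [Fintype G]
    (S : Subgroup G) (hSnormal : S.Normal) (hSsimple : IsSimpleGroup S)
    (hSnonabelian : ¬ ∀ a b : S, a * b = b * a)
    (hScent : ∀ g : G, (∀ s ∈ S, g * s = s * g) → g = 1)
    (K : Subgroup (Equiv.Perm G)) (hGK : starGroup (⊤ : Subgroup G) ≤ K)
    (h2cl : Is2Closed K)
    (L : Subgroup G) (hL : (L : Set G) = minBlock K)
    (U : Subgroup G) (hU : (U : Set G) = Uset K L)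
    (hLS : L = S)
    (hnormaltype : ∀ f ∈ K, ∀ hf : (∀ x : G, x ∈ L ↔ (f : Equiv.Perm G) x ∈ L),
      Equiv.Perm.subtypePerm f (fun x => (hf x).symm) ∈ D2 ↥L) :
    ∀ f ∈ K, ∀ hf : (∀ x : G, x ∈ U ↔ (f : Equiv.Perm G) x ∈ U),
      Equiv.Perm.subtypePerm f (fun x => (hf x).symm) ∈ D2 ↥U :=
  normal_type_KU_le_D2_general G S hSnormal hScent K hGK L hL U hU hLS hnormaltype
end
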